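/- For all finsets S, U, T, V of ι, if S ∩ V ≠ ∅ then (m_S * F_U) * (m_T * F_V) = m_{S ∪ T} * F_U in R (multiplication rules 10 and 13 of the Multiplication Rewriting Principle). -/

import Mathlib

variable {ι : Type*} [DecidableEq ι]

/-- Monomial semantics: `m S` evaluates an assignment `a` to `∏ i ∈ S, a i`. -/
def m (S : Finset ι) : (ι → ZMod 2) → ZMod 2 :=
  fun a => ∏ i ∈ S, a i

/-- Power-set sum semantics: `F U` evaluates `a` to the sum over nonempty subsets `A ⊆ U`
of `∏ i ∈ A, a i`. -/
def F (U : Finset ι) : (ι → ZMod 2) → ZMod 2 :=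
  fun a => ∑ A ∈ U.powerset.erase ∅, ∏ i ∈ A, a i

/-!
In `ZMod 2` every element is idempotent, so `m S * m T = m (S ∪ T)`. Expanding a product of
binomials gives `F V a = 1 + ∏ i ∈ V, (1 + a i)`, which is `1` as soon as `a j = 1` for some
`j ∈ V`; hence `m S * F V = m S` whenever `S` meets `V`, and the identity follows by commutativity.
-/

instance : BooleanRing (ZMod 2) where
  isIdempotentElem := by unfold IsIdempotentElem; decide

namespace BooleanRing

variable {α : Type*} [BooleanRing α] {s t u : Finset ι} {f : ι → α} {j : ι}

theorem prod_mul_prod_of_subset (h : u ⊆ s) : (∏ i ∈ s, f i) * ∏ i ∈ u, f i = ∏ i ∈ s, f i := by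
  rw [← Finset.prod_sdiff h, mul_assoc, mul_self]

theorem prod_union : ∏ i ∈ s ∪ t, f i = (∏ i ∈ s, f i) * ∏ i ∈ t, f i := by
  rw [← Finset.prod_inter_mul_prod_sdiff t s, ← mul_assoc,
    prod_mul_prod_of_subset Finset.inter_subset_right, ← Finset.prod_union Finset.disjoint_sdiff,
    Finset.union_sdiff_self_eq_union]

theorem mul_prod_one_add_eq_zero (hj : j ∈ s) : f j * ∏ i ∈ s, (1 + f i) = 0 := by
  rw [← Finset.mul_prod_erase s _ hj, ← mul_assoc, mul_one_add_self, zero_mul]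

end BooleanRing

open BooleanRing

theorem F_apply (U : Finset ι) (a : ι → ZMod 2) : F U a = 1 + ∏ i ∈ U, (1 + a i) := by
  unfold F
  rw [Finset.prod_one_add, ← Finset.add_sum_erase _ _ (Finset.empty_mem_powerset U),
    Finset.prod_empty, ← add_assoc, add_self, zero_add]

theorem m_union (S T : Finset ι) : m (S ∪ T) = m S * m T :=
  funext fun _ => prod_union

theorem m_mul_F_of_inter_nonempty {S V : Finset ι} (h : (S ∩ V).Nonempty) :
    m S * F V = m S := by
  obtain ⟨j, hj⟩ := h
  rw [Finset.mem_inter] at hj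
  funext a
  change (∏ i ∈ S, a i) * F V a = ∏ i ∈ S, a i
  rw [F_apply, ← prod_mul_prod_of_subset (Finset.singleton_subset_iff.mpr hj.1),
    Finset.prod_singleton, mul_add, mul_one, mul_assoc, mul_prod_one_add_eq_zero hj.2, mul_zero,
    add_zero]

theorem stmt5 (S U T V : Finset ι) (h : S ∩ V ≠ ∅) :
    (m S * F U) * (m T * F V) = m (S ∪ T) * F U := by
  calc (m S * F U) * (m T * F V) = (m S * F V) * m T * F U := by ring
    _ = m (S ∪ T) * F U := by
      rw [m_mul_F_of_inter_nonempty (Finset.nonempty_iff_ne_empty.mpr h), m_union]
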